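/- arXiv:2009.03775 — 5 statements merged into one kernel-verified Lean document; each statement's English description precedes it below -/
import Mathlib

section
/- If f : ℝⁿ → ℝ is differentiable and strongly convex with constant σ > 0, then for any two points μ, λ in ℝ^m (the dual space), the dual function q(λ) = min_{u ∈ U} { f(u) + ⟨Gᵀλ, u⟩ } (with U compact convex nonempty, G a linear map) has minimizers u(λ), u(μ) satisfying ‖u(μ) - u(λ)‖ ≤ (‖G‖/σ)‖μ - λ‖. -/
open RealInnerProductSpace

theorem dual_minimizer_lipschitz {n m : ℕ}
    (f : EuclideanSpace ℝ (Fin n) → ℝ) (σ : ℝ) (hσ : 0 < σ)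
    (hdiff : Differentiable ℝ f)
    (hsc : ∀ x y : EuclideanSpace ℝ (Fin n),
      ⟪gradient f y - gradient f x, y - x⟫ ≥ σ * ‖y - x‖ ^ 2)
    (U : Set (EuclideanSpace ℝ (Fin n)))
    (hUcpt : IsCompact U) (hUconv : Convex ℝ U) (hUne : U.Nonempty)
    (G : EuclideanSpace ℝ (Fin n) →L[ℝ] EuclideanSpace ℝ (Fin m))
    (u : EuclideanSpace ℝ (Fin m) → EuclideanSpace ℝ (Fin n))
    (hu_mem : ∀ lam, u lam ∈ U)
    (hu_min : ∀ lam, IsMinOn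
      (fun v => f v + ⟪(ContinuousLinearMap.adjoint G) lam, v⟫) U (u lam))
    (lam mu : EuclideanSpace ℝ (Fin m)) :
    ‖u mu - u lam‖ ≤ (‖G‖ / σ) * ‖mu - lam‖ := by
  -- first-order optimality condition
  have opt : ∀ c : EuclideanSpace ℝ (Fin n), ∀ w ∈ U,
      IsMinOn (fun v => f v + ⟪c, v⟫) U w →
      ∀ v ∈ U, 0 ≤ ⟪gradient f w, v - w⟫ + ⟪c, v - w⟫ := by
    intro c w hw hmin v hv
    have hF : HasFDerivAt (fun v => f v + ⟪c, v⟫)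
        ((InnerProductSpace.toDual ℝ _ (gradient f w) : _ →L[ℝ] ℝ) + innerSL ℝ c) w :=
      ((hdiff w).hasGradientAt.hasFDerivAt).add ((innerSL ℝ c).hasFDerivAt)
    have htc : v - w ∈ posTangentConeAt U w :=
      sub_mem_posTangentConeAt_of_segment_subset (hUconv.segment_subset hw hv)
    have := hmin.localize.hasFDerivWithinAt_nonneg hF.hasFDerivWithinAt htc
    simpa using this
  have h1 := opt _ _ (hu_mem lam) (hu_min lam) _ (hu_mem mu)
  have h2 := opt _ _ (hu_mem mu) (hu_min mu) _ (hu_mem lam)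
  have hsc' := hsc (u lam) (u mu)
  set d : EuclideanSpace ℝ (Fin n) := u mu - u lam with hd
  -- key inequality : σ ‖d‖^2 ≤ ⟪lam - mu, G d⟫
  have key : σ * ‖d‖ ^ 2 ≤ ⟪lam - mu, G d⟫ := by
    have hadj : ∀ (x : EuclideanSpace ℝ (Fin m)) (y : EuclideanSpace ℝ (Fin n)),
        ⟪(ContinuousLinearMap.adjoint G) x, y⟫ = ⟪x, G y⟫ := fun x y => by
      rw [ContinuousLinearMap.adjoint_inner_left]
    have e1 : (0:ℝ) ≤ ⟪gradient f (u lam), d⟫ + ⟪lam, G d⟫ := by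
      rw [← hadj]; exact h1
    have e2 : (0:ℝ) ≤ ⟪gradient f (u mu), u lam - u mu⟫ + ⟪mu, G (u lam - u mu)⟫ := by
      rw [← hadj]; exact h2
    have hneg : u lam - u mu = -d := by simp [hd]
    rw [hneg, map_neg, inner_neg_right, inner_neg_right] at e2
    have hsum : ⟪gradient f (u mu) - gradient f (u lam), d⟫ ≤ ⟪lam - mu, G d⟫ := by
      rw [inner_sub_left, inner_sub_left]
      linarith
    calc σ * ‖d‖ ^ 2 ≤ ⟪gradient f (u mu) - gradient f (u lam), d⟫ := by
          simpa [hd] using hsc'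
      _ ≤ ⟪lam - mu, G d⟫ := hsum
  have hGd : ⟪lam - mu, G d⟫ ≤ ‖mu - lam‖ * (‖G‖ * ‖d‖) := by
    calc ⟪lam - mu, G d⟫ ≤ ‖lam - mu‖ * ‖G d‖ := real_inner_le_norm _ _
      _ ≤ ‖mu - lam‖ * (‖G‖ * ‖d‖) := by
          rw [show ‖lam - mu‖ = ‖mu - lam‖ from norm_sub_rev _ _]
          exact mul_le_mul_of_nonneg_left (G.le_opNorm d) (norm_nonneg _)
  rcases eq_or_ne d 0 with h0 | h0
  · have : ‖d‖ = 0 := by rw [h0, norm_zero]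
    rw [this]
    positivity
  · have hdpos : 0 < ‖d‖ := norm_pos_iff.mpr h0
    have : σ * ‖d‖ * ‖d‖ ≤ ‖G‖ * ‖mu - lam‖ * ‖d‖ := by
      nlinarith [key.trans hGd]
    have := le_of_mul_le_mul_right this hdpos
    rw [div_mul_eq_mul_div, le_div_iff₀ hσ]
    linarith
end

section
/- Under the assumptions of strong convexity (constant σ) of f and compactness/convexity of U, the dual function q(λ) = min_{u ∈ U} { f(u) + ⟨Gᵀλ, u⟩ - ⟨λ, g⟩ } is differentiable with ∇q(λ) = G u(λ) - g, and its gradient is Lipschitz continuous with Lipschitz constant ‖G‖²/σ, i.e. ‖∇q(μ) - ∇q(λ)‖ ≤ (‖G‖²/σ)‖μ - λ‖ for all λ, μ. -/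
/-!
The minimizer map is Lipschitz: adding the first-order optimality conditions of `u λ`
and `u μ` and using strong monotonicity of `∇f` gives `σ ‖u μ - u λ‖ ≤ ‖Gᵀ (μ - λ)‖`.
Since `q` is a pointwise minimum of functions affine in `λ` with slope `G v - g`, the
envelope argument traps `q μ - q λ` between `⟪G (u μ) - g, μ - λ⟫` and
`⟪G (u λ) - g, μ - λ⟫`, so continuity of `λ ↦ G (u λ) - g` makes it the gradient of `q`.
-/

open RealInnerProductSpace

variable {E F : Type*}
  [NormedAddCommGroup E] [InnerProductSpace ℝ E] [CompleteSpace E]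
  [NormedAddCommGroup F] [InnerProductSpace ℝ F] [CompleteSpace F]

theorem IsMinOn.inner_gradient_sub_nonneg {φ : E → ℝ} {φ' x y : E} {s : Set E}
    (hmin : IsMinOn φ s x) (hφ : HasGradientAt φ φ' x) (hs : Convex ℝ s) (hx : x ∈ s)
    (hy : y ∈ s) : 0 ≤ ⟪φ', y - x⟫ := by
  simpa only [InnerProductSpace.toDual_apply_apply] using
    hmin.localize.hasFDerivWithinAt_nonneg hφ.hasFDerivAt.hasFDerivWithinAt
      (sub_mem_posTangentConeAt_of_segment_subset (hs.segment_subset hx hy))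

theorem HasGradientAt.add_inner_const {f : E → ℝ} {f' x : E} (hf : HasGradientAt f f' x)
    (a : E) : HasGradientAt (fun v => f v + ⟪a, v⟫) (f' + a) x := by
  rw [hasGradientAt_iff_hasFDerivAt, map_add]
  exact hf.hasFDerivAt.add (InnerProductSpace.toDual ℝ E a).hasFDerivAt

theorem norm_sub_le_of_isMinOn_add_inner {f : E → ℝ} {σ : ℝ} (hσ : 0 < σ) {U : Set E}
    (hU : Convex ℝ U) {a b x y : E} (hx : x ∈ U) (hy : y ∈ U)
    (hfx : DifferentiableAt ℝ f x) (hfy : DifferentiableAt ℝ f y)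
    (hmono : σ * ‖y - x‖ ^ 2 ≤ ⟪gradient f y - gradient f x, y - x⟫)
    (hxmin : IsMinOn (fun v => f v + ⟪a, v⟫) U x)
    (hymin : IsMinOn (fun v => f v + ⟪b, v⟫) U y) :
    ‖y - x‖ ≤ ‖b - a‖ / σ := by
  have hoptx := hxmin.inner_gradient_sub_nonneg (hfx.hasGradientAt.add_inner_const a) hU hx hy
  have hopty := hymin.inner_gradient_sub_nonneg (hfy.hasGradientAt.add_inner_const b) hU hy hx
  rw [inner_add_left] at hoptx
  rw [← neg_sub y x, inner_add_left, inner_neg_right, inner_neg_right] at hopty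
  have key : σ * ‖y - x‖ ^ 2 ≤ ‖b - a‖ * ‖y - x‖ := calc
    σ * ‖y - x‖ ^ 2 ≤ ⟪gradient f y - gradient f x, y - x⟫ := hmono
    _ ≤ ⟪a - b, y - x⟫ := by rw [inner_sub_left, inner_sub_left]; linarith
    _ ≤ ‖b - a‖ * ‖y - x‖ := by rw [← norm_neg, neg_sub]; exact real_inner_le_norm _ _
  rw [le_div_iff₀ hσ]
  rcases (norm_nonneg (y - x)).eq_or_lt with h0 | h0
  · rw [← h0, zero_mul]; positivity
  · rw [pow_two, ← mul_assoc, mul_comm σ] at key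
    exact le_of_mul_le_mul_right key h0

theorem hasGradientAt_of_inner_sandwich {φ : F → ℝ} {d : F → F} {x : F}
    (hd : ContinuousAt d x) (hup : ∀ y, φ y - φ x ≤ ⟪d x, y - x⟫)
    (hlow : ∀ y, ⟪d y, y - x⟫ ≤ φ y - φ x) : HasGradientAt φ (d x) x := by
  rw [hasGradientAt_iff_hasFDerivAt, hasFDerivAt_iff_isLittleO, Asymptotics.isLittleO_iff]
  intro c hc
  filter_upwards [hd (Metric.closedBall_mem_nhds (d x) hc)] with y hy
  have hdy : ‖d y - d x‖ ≤ c := by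
    simpa only [Set.mem_preimage, Metric.mem_closedBall, dist_eq_norm] using hy
  have hdev : |φ y - φ x - ⟪d x, y - x⟫| ≤ ‖d y - d x‖ * ‖y - x‖ := by
    have hcs := abs_real_inner_le_norm (d y - d x) (y - x)
    rw [inner_sub_left] at hcs
    rw [abs_le] at hcs ⊢
    have hupy := hup y
    have hlowy := hlow y
    constructor <;> linarith [mul_nonneg (norm_nonneg (d y - d x)) (norm_nonneg (y - x))]
  rw [Real.norm_eq_abs, InnerProductSpace.toDual_apply_apply]
  exact hdev.trans (by gcongr)

theorem hasGradientAt_value_of_isMinOn {X : Type*} {L : X → F → ℝ} {D : X → F}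
    (hL : ∀ v lam mu, L v mu = L v lam + ⟪D v, mu - lam⟫) {U : Set X} {u : F → X}
    (hu_mem : ∀ lam, u lam ∈ U) (hu_min : ∀ lam, IsMinOn (fun v => L v lam) U (u lam))
    {lam : F} (hcont : ContinuousAt (fun mu => D (u mu)) lam) :
    HasGradientAt (fun mu => L (u mu) mu) (D (u lam)) lam := by
  have envelope : ∀ mu nu, L (u nu) nu - L (u mu) mu ≤ ⟪D (u mu), nu - mu⟫ := by
    intro mu nu
    have hmin := isMinOn_iff.1 (hu_min nu) (u mu) (hu_mem mu)
    rw [hL (u mu) mu nu] at hmin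
    linarith
  refine hasGradientAt_of_inner_sandwich hcont (envelope lam) fun mu => ?_
  have hswap := envelope mu lam
  rw [← neg_sub mu lam, inner_neg_right] at hswap
  linarith

theorem dual_function_gradient_lipschitz_general {n m : ℕ}
    (f : EuclideanSpace ℝ (Fin n) → ℝ) (σ : ℝ) (hσ : 0 < σ)
    (hdiff : Differentiable ℝ f)
    (hsc : ∀ x y : EuclideanSpace ℝ (Fin n),
      ⟪gradient f y - gradient f x, y - x⟫ ≥ σ * ‖y - x‖ ^ 2)
    (U : Set (EuclideanSpace ℝ (Fin n)))
    (hUconv : Convex ℝ U)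
    (G : EuclideanSpace ℝ (Fin n) →L[ℝ] EuclideanSpace ℝ (Fin m))
    (g : EuclideanSpace ℝ (Fin m))
    (u : EuclideanSpace ℝ (Fin m) → EuclideanSpace ℝ (Fin n))
    (hu_mem : ∀ lam, u lam ∈ U)
    (hu_min : ∀ lam, IsMinOn
      (fun v => f v + ⟪(ContinuousLinearMap.adjoint G) lam, v⟫) U (u lam))
    (q : EuclideanSpace ℝ (Fin m) → ℝ)
    (hq : ∀ lam, q lam =
      f (u lam) + ⟪(ContinuousLinearMap.adjoint G) lam, u lam⟫ - ⟪lam, g⟫) :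
    (∀ lam, HasGradientAt q (G (u lam) - g) lam) ∧
    (∀ lam mu, ‖(G (u mu) - g) - (G (u lam) - g)‖ ≤ (‖G‖ ^ 2 / σ) * ‖mu - lam‖) := by
  set A := ContinuousLinearMap.adjoint G with hA
  have hu_lip : ∀ lam mu, ‖u mu - u lam‖ ≤ ‖G‖ / σ * ‖mu - lam‖ := fun lam mu => calc
    ‖u mu - u lam‖ ≤ ‖A (mu - lam)‖ / σ := by
      rw [map_sub]
      exact norm_sub_le_of_isMinOn_add_inner hσ hUconv (hu_mem lam) (hu_mem mu) (hdiff _)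
        (hdiff _) (hsc _ _) (hu_min lam) (hu_min mu)
    _ ≤ ‖G‖ / σ * ‖mu - lam‖ := by
      rw [div_mul_eq_mul_div, hA,
        ← LinearIsometryEquiv.norm_map ContinuousLinearMap.adjoint G]
      gcongr
      exact A.le_opNorm _
  have hgrad_lip : ∀ lam mu,
      ‖(G (u mu) - g) - (G (u lam) - g)‖ ≤ (‖G‖ ^ 2 / σ) * ‖mu - lam‖ := fun lam mu =>
    calc ‖(G (u mu) - g) - (G (u lam) - g)‖ = ‖G (u mu - u lam)‖ := by
          rw [map_sub, sub_sub_sub_cancel_right]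
      _ ≤ ‖G‖ * (‖G‖ / σ * ‖mu - lam‖) := G.le_opNorm_of_le (hu_lip lam mu)
      _ = (‖G‖ ^ 2 / σ) * ‖mu - lam‖ := by ring
  have hlagr_affine : ∀ v lam mu, f v + ⟪A mu, v⟫ - ⟪mu, g⟫
      = f v + ⟪A lam, v⟫ - ⟪lam, g⟫ + ⟪G v - g, mu - lam⟫ := by
    intro v lam mu
    simp only [hA, ContinuousLinearMap.adjoint_inner_left, inner_sub_left, inner_sub_right,
      real_inner_comm (G v), real_inner_comm g]
    ring
  have hlagr_min : ∀ lam, IsMinOn (fun v => f v + ⟪A lam, v⟫ - ⟪lam, g⟫) U (u lam) :=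
    fun lam => by
      simpa only [sub_eq_add_neg] using (hu_min lam).add (isMinOn_const (b := -⟪lam, g⟫))
  refine ⟨fun lam => ?_, hgrad_lip⟩
  rw [funext hq]
  exact hasGradientAt_value_of_isMinOn (L := fun v lam => f v + ⟪A lam, v⟫ - ⟪lam, g⟫)
    hlagr_affine hu_mem hlagr_min (continuousAt_of_locally_lipschitz one_pos _ fun mu _ => by
      simpa only [dist_eq_norm] using hgrad_lip lam mu)

theorem dual_function_gradient_lipschitz {n m : ℕ}
    (f : EuclideanSpace ℝ (Fin n) → ℝ) (σ : ℝ) (hσ : 0 < σ)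
    (hdiff : Differentiable ℝ f)
    (hsc : ∀ x y : EuclideanSpace ℝ (Fin n),
      ⟪gradient f y - gradient f x, y - x⟫ ≥ σ * ‖y - x‖ ^ 2)
    (U : Set (EuclideanSpace ℝ (Fin n)))
    (hUcpt : IsCompact U) (hUconv : Convex ℝ U) (hUne : U.Nonempty)
    (G : EuclideanSpace ℝ (Fin n) →L[ℝ] EuclideanSpace ℝ (Fin m))
    (g : EuclideanSpace ℝ (Fin m))
    (u : EuclideanSpace ℝ (Fin m) → EuclideanSpace ℝ (Fin n))
    (hu_mem : ∀ lam, u lam ∈ U)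
    (hu_min : ∀ lam, IsMinOn
      (fun v => f v + ⟪(ContinuousLinearMap.adjoint G) lam, v⟫) U (u lam))
    (q : EuclideanSpace ℝ (Fin m) → ℝ)
    (hq : ∀ lam, q lam =
      f (u lam) + ⟪(ContinuousLinearMap.adjoint G) lam, u lam⟫ - ⟪lam, g⟫) :
    (∀ lam, HasGradientAt q (G (u lam) - g) lam) ∧
    (∀ lam mu, ‖(G (u mu) - g) - (G (u lam) - g)‖ ≤ (‖G‖ ^ 2 / σ) * ‖mu - lam‖) :=
  dual_function_gradient_lipschitz_general f σ hσ hdiff hsc U hUconv G g u hu_mem hu_min q hq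
end

section
/- Consider Nesterov's accelerated gradient ascent for maximizing a concave differentiable function q with the block-majorization property q(λ) ≥ q(ξ) + ⟨λ−ξ,∇q(ξ)⟩ − Σᵢ (1/(2ηᵢ))‖λᵢ−ξᵢ‖², with iterates λ(k) = argmax_μ ψ(μ, λ̂(k)), θ(k+1) = (1+√(1+4θ(k)²))/2, θ(1)=1, λ̂(k+1) = λ(k) + ((θ(k)−1)/θ(k+1))(λ(k)−λ(k−1)). Let λ* be a maximizer of q and ωᵢ(k) = θ(k)λᵢ(k) − (θ(k)−1)λᵢ(k−1) − λᵢ*. Then for all k ≥ 1: Σᵢ (1/(2ηᵢ))(‖ωᵢ(k+1)‖² − ‖ωᵢ(k)‖²) ≤ θ(k)²(q(λ*) − q(λ(k))) − θ(k+1)²(q(λ*) − q(λ(k+1))). -/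
open RealInnerProductSpace Finset

private lemma block_id {E : Type*} [NormedAddCommGroup E] [InnerProductSpace ℝ E]
    (t : ℝ) (h p a s : E) :
    t * (t - 1) * (‖a - h‖ ^ 2 - ‖a - p‖ ^ 2) + t * (‖s - h‖ ^ 2 - ‖s - p‖ ^ 2)
      = ‖t • h - (t - 1) • a - s‖ ^ 2 - ‖t • p - (t - 1) • a - s‖ ^ 2 := by
  simp only [← real_inner_self_eq_norm_sq, inner_sub_left, inner_sub_right,
    real_inner_smul_left, real_inner_smul_right]
  simp only [real_inner_comm h a, real_inner_comm p a, real_inner_comm s a,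
    real_inner_comm s h, real_inner_comm s p, real_inner_comm p h]
  ring

private lemma blk_key {E : Type*} [NormedAddCommGroup E] [InnerProductSpace ℝ E]
    (c : ℝ) (hc : c ≠ 0) (x h p : E) :
    ⟪x - h, c⁻¹ • (p - h)⟫ - ⟪p - h, c⁻¹ • (p - h)⟫ + 1 / (2 * c) * ‖p - h‖ ^ 2
      = 1 / (2 * c) * (‖x - h‖ ^ 2 - ‖x - p‖ ^ 2) := by
  simp only [← real_inner_self_eq_norm_sq, real_inner_smul_right,
    inner_sub_left, inner_sub_right]
  simp only [real_inner_comm h x, real_inner_comm p x, real_inner_comm p h]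
  field_simp
  ring

theorem accelerated_key_inequality {N : ℕ} {m : Fin N → ℕ}
    (η : Fin N → ℝ) (hη : ∀ i, 0 < η i)
    (q : ((j : Fin N) → EuclideanSpace ℝ (Fin (m j))) → ℝ)
    (g : ((j : Fin N) → EuclideanSpace ℝ (Fin (m j))) →
      (j : Fin N) → EuclideanSpace ℝ (Fin (m j)))
    (hconc : ∀ x y, q x ≤ q y + ∑ j, ⟪x j - y j, g y j⟫)
    (hmaj : ∀ x y, q x ≥ q y + (∑ j, ⟪x j - y j, g y j⟫)
      - ∑ j, (1 / (2 * η j)) * ‖x j - y j‖ ^ 2)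
    (θ : ℕ → ℝ) (hθ1 : θ 1 = 1)
    (hθrec : ∀ k ≥ 1, θ (k + 1) = (1 + Real.sqrt (1 + 4 * θ k ^ 2)) / 2)
    (lam lamhat : ℕ → (j : Fin N) → EuclideanSpace ℝ (Fin (m j)))
    (hgrad : ∀ k ≥ 1, ∀ i, lam k i = lamhat k i + η i • g (lamhat k) i)
    (hmom : ∀ k ≥ 1, ∀ i,
      lamhat (k + 1) i = lam k i + ((θ k - 1) / θ (k + 1)) • (lam k i - lam (k - 1) i))
    (lamstar : (j : Fin N) → EuclideanSpace ℝ (Fin (m j)))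
    (hstar : ∀ x, q x ≤ q lamstar)
    (ω : ℕ → (j : Fin N) → EuclideanSpace ℝ (Fin (m j)))
    (hω : ∀ k ≥ 1, ∀ i,
      ω k i = θ k • lam k i - (θ k - 1) • lam (k - 1) i - lamstar i) :
    ∀ k ≥ 1,
      (∑ i, (1 / (2 * η i)) * (‖ω (k + 1) i‖ ^ 2 - ‖ω k i‖ ^ 2))
        ≤ θ k ^ 2 * (q lamstar - q (lam k))
          - θ (k + 1) ^ 2 * (q lamstar - q (lam (k + 1))) := by
  intro k hk
  set t : ℝ := θ (k + 1) with ht_def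
  set h : (j : Fin N) → EuclideanSpace ℝ (Fin (m j)) := lamhat (k + 1) with hh_def
  set p : (j : Fin N) → EuclideanSpace ℝ (Fin (m j)) := lam (k + 1) with hp_def
  set a : (j : Fin N) → EuclideanSpace ℝ (Fin (m j)) := lam k with ha_def
  set s : (j : Fin N) → EuclideanSpace ℝ (Fin (m j)) := lamstar with hs_def
  -- facts about θ
  have hθpos : ∀ n ≥ 1, 1 ≤ θ n ∧ (n ≥ 2 → θ n ^ 2 - θ n = θ (n-1) ^ 2) := by
    intro n hn
    constructor
    · -- 1 ≤ θ n
      rcases Nat.exists_eq_add_of_le hn with ⟨j, rfl⟩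
      cases j with
      | zero => simpa using hθ1.ge
      | succ j =>
        rw [show 1 + (j + 1) = (1 + j) + 1 by ring, hθrec (1 + j) (by omega)]
        have h1 : (1 : ℝ) ≤ Real.sqrt (1 + 4 * θ (1 + j) ^ 2) := by
          have h2 : Real.sqrt 1 ≤ Real.sqrt (1 + 4 * θ (1 + j) ^ 2) :=
            Real.sqrt_le_sqrt (by nlinarith [sq_nonneg (θ (1 + j))])
          rwa [Real.sqrt_one] at h2
        linarith
    · intro hn2
      rcases Nat.exists_eq_add_of_le hn2 with ⟨j, rfl⟩
      have hrec := hθrec (1 + j) (by omega)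
      rw [show 2 + j = (1 + j) + 1 by ring]
      have hsq : Real.sqrt (1 + 4 * θ (1 + j) ^ 2) ^ 2 = 1 + 4 * θ (1 + j) ^ 2 :=
        Real.sq_sqrt (by nlinarith [sq_nonneg (θ (1 + j))])
      rw [hθrec (1 + j) (by omega)]
      rw [show (1 + j + 1) - 1 = 1 + j by omega]
      nlinarith [hsq]
  have ht1 : 1 ≤ t := (hθpos (k + 1) (by omega)).1
  have ht0 : (0 : ℝ) < t := by linarith
  have ht2 : t ^ 2 - t = θ k ^ 2 := by
    have := (hθpos (k + 1) (by omega)).2 (by omega)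
    simpa using this
  -- gradient step rewritten
  have hg : ∀ i, g h i = (η i)⁻¹ • (p i - h i) := by
    intro i
    have := hgrad (k + 1) (by omega) i
    rw [← hh_def, ← hp_def] at this
    rw [show p i - h i = η i • g h i by rw [this]; abel]
    rw [smul_smul, inv_mul_cancel₀ (hη i).ne', one_smul]
  -- key inequality: ∀ x, q x - q p ≤ ∑ 1/(2η) (‖x-h‖² - ‖x-p‖²)
  have key : ∀ x, q x - q p ≤
      ∑ i, (1 / (2 * η i)) * (‖x i - h i‖ ^ 2 - ‖x i - p i‖ ^ 2) := by
    intro x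
    have h1 := hconc x h
    have h2 := hmaj p h
    have hsum_eq : (∑ i, ⟪x i - h i, g h i⟫) - (∑ i, ⟪p i - h i, g h i⟫)
        + (∑ i, (1 / (2 * η i)) * ‖p i - h i‖ ^ 2)
        = ∑ i, (1 / (2 * η i)) * (‖x i - h i‖ ^ 2 - ‖x i - p i‖ ^ 2) := by
      rw [← Finset.sum_sub_distrib, ← Finset.sum_add_distrib]
      refine Finset.sum_congr rfl fun i _ => ?_
      rw [hg i]
      exact blk_key (η i) (hη i).ne' (x i) (h i) (p i)
    linarith
  -- ω identities
  have hw1 : ∀ i, ω (k + 1) i = t • p i - (t - 1) • a i - s i := by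
    intro i
    have := hω (k + 1) (by omega) i
    rw [show (k + 1) - 1 = k by omega] at this
    exact this
  have hw0 : ∀ i, ω k i = t • h i - (t - 1) • a i - s i := by
    intro i
    have hwk := hω k hk i
    have hmk := hmom k hk i
    rw [← hh_def, ← ha_def] at hmk
    rw [hwk, hmk, ← ha_def]
    have hcc : t * ((θ k - 1) / t) = θ k - 1 := mul_div_cancel₀ _ ht0.ne'
    rw [smul_add, smul_smul, hcc]
    module
  -- the telescoping identity
  have hid : t * ((t - 1) * (∑ i, (1 / (2 * η i)) * (‖a i - h i‖ ^ 2 - ‖a i - p i‖ ^ 2))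
        + ∑ i, (1 / (2 * η i)) * (‖s i - h i‖ ^ 2 - ‖s i - p i‖ ^ 2))
      = ∑ i, (1 / (2 * η i)) * (‖ω k i‖ ^ 2 - ‖ω (k + 1) i‖ ^ 2) := by
    rw [Finset.mul_sum, ← Finset.sum_add_distrib, Finset.mul_sum]
    refine Finset.sum_congr rfl fun i _ => ?_
    rw [hw0 i, hw1 i]
    have hbid := block_id t (h i) (p i) (a i) (s i)
    linear_combination (1 / (2 * η i)) * hbid
  -- combine
  have K1 := key a
  have K2 := key s
  have hK1' : (t - 1) * (q a - q p) ≤ (t - 1) *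
      (∑ i, (1 / (2 * η i)) * (‖a i - h i‖ ^ 2 - ‖a i - p i‖ ^ 2)) :=
    mul_le_mul_of_nonneg_left K1 (by linarith)
  have hmul : t * ((t - 1) * (q a - q p) + (q s - q p)) ≤
      t * ((t - 1) * (∑ i, (1 / (2 * η i)) * (‖a i - h i‖ ^ 2 - ‖a i - p i‖ ^ 2))
        + ∑ i, (1 / (2 * η i)) * (‖s i - h i‖ ^ 2 - ‖s i - p i‖ ^ 2)) :=
    mul_le_mul_of_nonneg_left (by linarith) ht0.le
  rw [hid] at hmul
  have hneg : (∑ i, (1 / (2 * η i)) * (‖ω (k + 1) i‖ ^ 2 - ‖ω k i‖ ^ 2))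
      + (∑ i, (1 / (2 * η i)) * (‖ω k i‖ ^ 2 - ‖ω (k + 1) i‖ ^ 2)) = 0 := by
    rw [← Finset.sum_add_distrib]
    exact Finset.sum_eq_zero fun i _ => by ring
  have heq : θ k ^ 2 * (q s - q a) - t ^ 2 * (q s - q p)
      = -(t * ((t - 1) * (q a - q p) + (q s - q p))) := by
    linear_combination (q a - q s) * ht2
  linarith
end

section
/- Under the key inequality Σᵢ (1/(2ηᵢ))(‖ωᵢ(k+1)‖² − ‖ωᵢ(k)‖²) ≤ θ(k)²δ(k) − θ(k+1)²δ(k+1), where δ(k) = q(λ*) − q(λ(k)) ≥ 0, and θ(k) ≥ (k+1)/2 with θ(1)=1, the iterate gap satisfies q(λ*) − q(λ(k)) ≤ 4(V(1) + q(λ*) − q(λ(1)))/(k+1)², where V(k) = Σᵢ (1/(2ηᵢ))‖ωᵢ(k)‖². -/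
theorem deterministic_rate (δ V θ : ℕ → ℝ)
    (hδ : ∀ k ≥ 1, 0 ≤ δ k) (hV : ∀ k ≥ 1, 0 ≤ V k)
    (hθ1 : θ 1 = 1) (hθ : ∀ k ≥ 1, θ k ≥ ((k : ℝ) + 1) / 2)
    (hkey : ∀ k ≥ 1, V (k + 1) - V k ≤ θ k ^ 2 * δ k - θ (k + 1) ^ 2 * δ (k + 1)) :
    ∀ k ≥ 1, δ k ≤ 4 * (V 1 + δ 1) / ((k : ℝ) + 1) ^ 2 := by
  have main : ∀ k, 1 ≤ k → V k + θ k ^ 2 * δ k ≤ V 1 + δ 1 := by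
    intro k hk
    induction k with
    | zero => omega
    | succ n ih =>
      rcases Nat.lt_or_ge 1 (n + 1) with h | h
      · have hn : 1 ≤ n := by omega
        have h1 := hkey n hn
        have h2 := ih hn
        linarith
      · have : n = 0 := by omega
        subst this
        simp [hθ1]
  intro k hk
  have h1 := main k hk
  have hVk := hV k hk
  have hδk := hδ k hk
  have hθk := hθ k hk
  have hkpos : (0:ℝ) < ((k:ℝ)+1) := by positivity
  have hθpos : 0 < θ k := lt_of_lt_of_le (by positivity) hθk
  have hsq : (((k:ℝ)+1)/2)^2 * δ k ≤ θ k ^ 2 * δ k := by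
    apply mul_le_mul_of_nonneg_right _ hδk
    exact pow_le_pow_left₀ (by positivity) hθk 2
  rw [ge_iff_le, le_div_iff₀ (by positivity : (0:ℝ) < ((k:ℝ)+1)^2)] at *
  nlinarith
end

section
/- Suppose a nonnegative sequence of random variables V(k) ≥ 0 and nonnegative F(k)-measurable quantities δ(k) = q(λ*) − q(λ(k)) ≥ 0 satisfy E[V(k+1) − V(k) | F(k)] ≤ θ(k)²δ(k) − θ(k+1)²δ(k+1) a.s., with θ(1) = 1 and θ(k) ≥ (k+1)/2. Then E[q(λ*) − q(λ(k))] ≤ C/(k+1)², with C = 4E[V(1) + q(λ*) − q(λ(1))] ≥ 0. -/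
open MeasureTheory

theorem stochastic_rate {Ω : Type*} {mΩ : MeasurableSpace Ω}
    (μ : Measure Ω) [IsProbabilityMeasure μ]
    (F : ℕ → MeasurableSpace Ω) (hF : ∀ k, F k ≤ mΩ)
    (V δ : ℕ → Ω → ℝ) (θ : ℕ → ℝ)
    (hVnn : ∀ k a, 0 ≤ V k a) (hδnn : ∀ k a, 0 ≤ δ k a)
    (hVint : ∀ k, Integrable (V k) μ) (hδint : ∀ k, Integrable (δ k) μ)
    (hδmeas : ∀ k, StronglyMeasurable[F k] (δ k))
    (hθ1 : θ 1 = 1) (hθ : ∀ k ≥ 1, θ k ≥ ((k : ℝ) + 1) / 2)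
    (hkey : ∀ k ≥ 1,
      μ[fun a => V (k + 1) a - V k a|F k]
        ≤ᵐ[μ] fun a => θ k ^ 2 * δ k a - θ (k + 1) ^ 2 * δ (k + 1) a) :
    ∀ k ≥ 1, ∫ a, δ k a ∂μ
      ≤ (4 * ∫ a, (V 1 a + δ 1 a) ∂μ) / ((k : ℝ) + 1) ^ 2 := by
  set a : ℕ → ℝ := fun k => (∫ x, V k x ∂μ) + θ k ^ 2 * ∫ x, δ k x ∂μ with ha
  have hstep : ∀ k ≥ 1, a (k + 1) ≤ a k := by
    intro k hk
    have hint1 : Integrable (fun x => V (k + 1) x - V k x) μ :=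
      (hVint (k + 1)).sub (hVint k)
    have h1 : ∫ x, (μ[fun a => V (k + 1) a - V k a|F k]) x ∂μ
        = ∫ x, (V (k + 1) x - V k x) ∂μ := integral_condExp (hF k)
    have h2 : ∫ x, (μ[fun a => V (k + 1) a - V k a|F k]) x ∂μ
        ≤ ∫ x, (θ k ^ 2 * δ k x - θ (k + 1) ^ 2 * δ (k + 1) x) ∂μ := by
      refine integral_mono_ae integrable_condExp ?_ (hkey k hk)
      exact ((hδint k).const_mul _).sub ((hδint (k + 1)).const_mul _)
    rw [h1] at h2
    rw [integral_sub (hVint (k + 1)) (hVint k),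
      integral_sub ((hδint k).const_mul _) ((hδint (k + 1)).const_mul _),
      integral_const_mul, integral_const_mul] at h2
    simp only [ha]
    linarith
  have hmono : ∀ k ≥ 1, a k ≤ a 1 := by
    intro k hk
    induction k with
    | zero => omega
    | succ n ih =>
      rcases Nat.lt_or_ge n 1 with h | h
      · interval_cases n
        · rfl
      · exact (hstep n h).trans (ih h)
  intro k hk
  have hθk := hθ k hk
  have hkpos : (0:ℝ) < ((k : ℝ) + 1) / 2 := by positivity
  have hθpos : (0:ℝ) < θ k := lt_of_lt_of_le hkpos hθk
  have hδpos : (0:ℝ) ≤ ∫ x, δ k x ∂μ := integral_nonneg (fun x => hδnn k x)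
  have hVpos : (0:ℝ) ≤ ∫ x, V k x ∂μ := integral_nonneg (fun x => hVnn k x)
  have hC : (∫ x, (V 1 x + δ 1 x) ∂μ) = a 1 := by
    rw [integral_add (hVint 1) (hδint 1)]
    simp [ha, hθ1]
  have h3 : θ k ^ 2 * ∫ x, δ k x ∂μ ≤ ∫ x, (V 1 x + δ 1 x) ∂μ := by
    rw [hC]
    have := hmono k hk
    simp only [ha] at this ⊢
    linarith
  have h4 : (((k : ℝ) + 1) / 2) ^ 2 * ∫ x, δ k x ∂μ ≤ θ k ^ 2 * ∫ x, δ k x ∂μ := by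
    apply mul_le_mul_of_nonneg_right _ hδpos
    exact pow_le_pow_left₀ hkpos.le hθk 2
  rw [le_div_iff₀ (by positivity)]
  calc (∫ x, δ k x ∂μ) * ((k:ℝ) + 1) ^ 2
      = 4 * ((((k:ℝ) + 1) / 2) ^ 2 * ∫ x, δ k x ∂μ) := by ring
    _ ≤ 4 * (θ k ^ 2 * ∫ x, δ k x ∂μ) := by linarith
    _ ≤ 4 * ∫ x, (V 1 x + δ 1 x) ∂μ := by linarith
end
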